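/- arXiv:1504.02747 — 2 statements merged into one kernel-verified Lean document; each statement's English description precedes it below -/
import Mathlib

section
/- Let R > 0, 0 < p ≤ q, and let f, g be nonnegative functions in L^q([0,R]) whose decreasing rearrangements f*, g* satisfy ∫₀ˢ (f*)^p dt ≤ ∫₀ˢ (g*)^p dt for all s ∈ [0,R]. Then ∫₀ᴿ f^q dt ≤ ∫₀ᴿ g^q dt. -/
open MeasureTheory Set

/-- Distribution function of `f` on `[0,R]`. -/
noncomputable def distribFun (R : ℝ) (f : ℝ → ℝ) (t : ℝ) : ℝ :=
  (volume {x ∈ Icc (0:ℝ) R | t < f x}).toReal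

/-- Decreasing rearrangement of `f` on `[0,R]`: the generalized inverse of the
distribution function of `|f|` (for nonnegative `f`, of `f`). -/
noncomputable def decRearr (R : ℝ) (f : ℝ → ℝ) (s : ℝ) : ℝ :=
  sInf {t : ℝ | 0 ≤ t ∧ distribFun R f t ≤ s}

open scoped ENNReal

/-!
`f` on `[0,R]` and its decreasing rearrangement `f*` on `(0,R]` have the same distribution function,
so `∫ f^q = ∫ (f*)^q` by the layer-cake formula. Put `u = (f*)^p`, `v = (g*)^p` and `r = q/p ≥ 1`; the
hypothesis reads `∫₀ᵃ u ≤ ∫₀ᵃ v` for every `a`. The weight `w = u^(r-1)` is decreasing, so its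
superlevel sets are initial segments, and the layer-cake formula for `w` gives
`∫ u^r = ∫ w u ≤ ∫ w v`. Young's inequality `r u^(r-1) v ≤ (r-1) u^r + v^r` then yields
`r ∫ u^r ≤ (r-1) ∫ u^r + ∫ v^r`, i.e. `∫ u^r ≤ ∫ v^r`.
-/

lemma exists_Ioo_subset_subset_Ioc {R : ℝ} (hR : 0 ≤ R) {S : Set ℝ} (hS : S ⊆ Ioc 0 R)
    (hdown : ∀ x ∈ S, ∀ y ∈ Ioc 0 x, y ∈ S) :
    ∃ a ∈ Icc 0 R, Ioo 0 a ⊆ S ∧ S ⊆ Ioc 0 a := by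
  rcases S.eq_empty_or_nonempty with rfl | hne
  · exact ⟨0, ⟨le_rfl, hR⟩, by simp, empty_subset _⟩
  have hbdd : BddAbove S := ⟨R, fun x hx => (hS hx).2⟩
  obtain ⟨x, hx⟩ := hne
  refine ⟨sSup S, ⟨(hS hx).1.le.trans (le_csSup hbdd hx), csSup_le ⟨x, hx⟩ fun y hy => (hS hy).2⟩,
    fun y hy => ?_, fun y hy => ⟨(hS hy).1, le_csSup hbdd hy⟩⟩
  obtain ⟨z, hz, hyz⟩ := exists_lt_of_lt_csSup ⟨x, hx⟩ hy.2
  exact hdown z hz y ⟨hy.1, hyz.le⟩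

theorem lintegral_mul_le_lintegral_mul_of_antitoneOn {R : ℝ} (hR : 0 ≤ R) {w : ℝ → ℝ}
    (hw0 : ∀ s, 0 ≤ w s) (hw : AntitoneOn w (Ioc 0 R)) {u v : ℝ → ℝ≥0∞}
    (hu : AEMeasurable u (volume.restrict (Ioc 0 R)))
    (hv : AEMeasurable v (volume.restrict (Ioc 0 R)))
    (huv : ∀ a ∈ Icc 0 R, ∫⁻ s in Ioc 0 a, u s ≤ ∫⁻ s in Ioc 0 a, v s) :
    ∫⁻ s in Ioc 0 R, u s * ENNReal.ofReal (w s) ≤ ∫⁻ s in Ioc 0 R, v s * ENNReal.ofReal (w s) := by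
  have hwm : AEMeasurable w (volume.restrict (Ioc 0 R)) :=
    aemeasurable_restrict_of_antitoneOn measurableSet_Ioc hw
  have layer_cake : ∀ z : ℝ → ℝ≥0∞, AEMeasurable z (volume.restrict (Ioc 0 R)) →
      ∫⁻ s in Ioc 0 R, z s * ENNReal.ofReal (w s) =
        ∫⁻ τ in Ioi 0, ∫⁻ s in {s | τ < w s} ∩ Ioc 0 R, z s := by
    intro z hz
    calc ∫⁻ s in Ioc 0 R, z s * ENNReal.ofReal (w s)
        = ∫⁻ s, ENNReal.ofReal (w s) ∂(volume.restrict (Ioc 0 R)).withDensity z :=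
          (lintegral_withDensity_eq_lintegral_mul₀ hz hwm.ennreal_ofReal).symm
      _ = _ := by
        rw [lintegral_eq_lintegral_meas_lt _ (ae_of_all _ hw0)
          (hwm.mono_ac (withDensity_absolutelyContinuous _ _))]
        simp only [withDensity_apply', Measure.restrict_restrict' measurableSet_Ioc]
  rw [layer_cake u hu, layer_cake v hv]
  refine lintegral_mono fun τ => ?_
  obtain ⟨a, ha, hIoo, hIoc⟩ := exists_Ioo_subset_subset_Ioc hR (S := {s | τ < w s} ∩ Ioc 0 R)
    inter_subset_right fun x hx y hy =>
      ⟨hx.1.trans_le (hw ⟨hy.1, hy.2.trans hx.2.2⟩ hx.2 hy.2), hy.1, hy.2.trans hx.2.2⟩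
  calc ∫⁻ s in {s | τ < w s} ∩ Ioc 0 R, u s ≤ ∫⁻ s in Ioc 0 a, u s := lintegral_mono_set hIoc
    _ ≤ ∫⁻ s in Ioc 0 a, v s := huv a ha
    _ = ∫⁻ s in Ioo 0 a, v s := setLIntegral_congr Ioo_ae_eq_Ioc.symm
    _ ≤ ∫⁻ s in {s | τ < w s} ∩ Ioc 0 R, v s := lintegral_mono_set hIoo

lemma mul_rpow_sub_one_mul_le {r x y : ℝ} (hr : 1 ≤ r) (hx : 0 ≤ x) (hy : 0 ≤ y) :
    r * (x ^ (r - 1) * y) ≤ (r - 1) * x ^ r + y ^ r := by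
  have hr0 : 0 < r := by linarith
  -- weighted AM-GM for `x ^ r` and `y ^ r` with weights `(r - 1) / r` and `1 / r`
  have amgm := Real.geom_mean_le_arith_mean2_weighted (div_nonneg (sub_nonneg.2 hr) hr0.le)
    (one_div_nonneg.2 hr0.le) (Real.rpow_nonneg hx r) (Real.rpow_nonneg hy r)
    (by field_simp; ring)
  rw [← Real.rpow_mul hx, ← Real.rpow_mul hy, mul_div_cancel₀ _ hr0.ne', mul_one_div_cancel hr0.ne',
    Real.rpow_one] at amgm
  calc r * (x ^ (r - 1) * y) ≤ r * ((r - 1) / r * x ^ r + 1 / r * y ^ r) := by gcongr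
    _ = (r - 1) * x ^ r + y ^ r := by field_simp

lemma rpow_eq_mul_rpow_sub_one {r x : ℝ} (hr : 1 ≤ r) (hx : 0 ≤ x) : x ^ r = x * x ^ (r - 1) := by
  conv_lhs => rw [← add_sub_cancel 1 r, Real.rpow_add' hx (by linarith), Real.rpow_one]

theorem lintegral_rpow_le_of_forall_setLIntegral_le {R r : ℝ} (hR : 0 ≤ R) (hr : 1 ≤ r)
    {u v : ℝ → ℝ} (hu0 : ∀ s, 0 ≤ u s) (hv0 : ∀ s, 0 ≤ v s) (hu : AntitoneOn u (Ioc 0 R))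
    (hv : AEMeasurable v (volume.restrict (Ioc 0 R)))
    (huv : ∀ a ∈ Icc 0 R,
      ∫⁻ s in Ioc 0 a, ENNReal.ofReal (u s) ≤ ∫⁻ s in Ioc 0 a, ENNReal.ofReal (v s))
    (hfin : ∫⁻ s in Ioc 0 R, ENNReal.ofReal (u s ^ r) ≠ ∞) :
    ∫⁻ s in Ioc 0 R, ENNReal.ofReal (u s ^ r) ≤ ∫⁻ s in Ioc 0 R, ENNReal.ofReal (v s ^ r) := by
  have hum : AEMeasurable u (volume.restrict (Ioc 0 R)) :=
    aemeasurable_restrict_of_antitoneOn measurableSet_Ioc hu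
  set A := ∫⁻ s in Ioc 0 R, ENNReal.ofReal (u s ^ r)
  set B := ∫⁻ s in Ioc 0 R, ENNReal.ofReal (v s ^ r)
  have hardy : A ≤ ∫⁻ s in Ioc 0 R, ENNReal.ofReal (v s) * ENNReal.ofReal (u s ^ (r - 1)) := by
    have := lintegral_mul_le_lintegral_mul_of_antitoneOn hR
      (fun s => Real.rpow_nonneg (hu0 s) (r - 1))
      (fun a ha b hb hab => Real.rpow_le_rpow (hu0 b) (hu ha hb hab) (by linarith))
      hum.ennreal_ofReal hv.ennreal_ofReal huv
    simpa only [← ENNReal.ofReal_mul (hu0 _), ← rpow_eq_mul_rpow_sub_one hr (hu0 _)] using this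
  have young : ∀ s, ENNReal.ofReal r * (ENNReal.ofReal (v s) * ENNReal.ofReal (u s ^ (r - 1)))
      ≤ ENNReal.ofReal (r - 1) * ENNReal.ofReal (u s ^ r) + ENNReal.ofReal (v s ^ r) := by
    intro s
    rw [← ENNReal.ofReal_mul (hv0 s), ← ENNReal.ofReal_mul (by linarith),
      ← ENNReal.ofReal_mul (by linarith), ← ENNReal.ofReal_add
        (mul_nonneg (by linarith) (Real.rpow_nonneg (hu0 s) r)) (Real.rpow_nonneg (hv0 s) r),
      mul_comm (v s)]
    exact ENNReal.ofReal_le_ofReal (mul_rpow_sub_one_mul_le hr (hu0 s) (hv0 s))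
  refine ENNReal.le_of_add_le_add_left
    (ENNReal.mul_ne_top (ENNReal.ofReal_ne_top (r := r - 1)) hfin) ?_
  calc ENNReal.ofReal (r - 1) * A + A = ENNReal.ofReal r * A := by
        rw [← add_one_mul, ← ENNReal.ofReal_one, ← ENNReal.ofReal_add (by linarith) zero_le_one,
          sub_add_cancel]
    _ ≤ ENNReal.ofReal r *
        ∫⁻ s in Ioc 0 R, ENNReal.ofReal (v s) * ENNReal.ofReal (u s ^ (r - 1)) := by gcongr
    _ = ∫⁻ s in Ioc 0 R,
        ENNReal.ofReal r * (ENNReal.ofReal (v s) * ENNReal.ofReal (u s ^ (r - 1))) :=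
      (lintegral_const_mul' _ _ ENNReal.ofReal_ne_top).symm
    _ ≤ ∫⁻ s in Ioc 0 R, ENNReal.ofReal (r - 1) * ENNReal.ofReal (u s ^ r) +
        ENNReal.ofReal (v s ^ r) := lintegral_mono young
    _ = ENNReal.ofReal (r - 1) * A + B := by
      rw [lintegral_add_left' ((hum.pow_const r).ennreal_ofReal.const_mul _),
        lintegral_const_mul' _ _ ENNReal.ofReal_ne_top]

theorem lintegral_rpow_le_of_forall_setLIntegral_rpow_le {R p q : ℝ} (hR : 0 ≤ R) (hp : 0 < p)
    (hpq : p ≤ q) {u v : ℝ → ℝ} (hu0 : ∀ s, 0 ≤ u s) (hv0 : ∀ s, 0 ≤ v s)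
    (hu : AntitoneOn u (Ioc 0 R)) (hv : AEMeasurable v (volume.restrict (Ioc 0 R)))
    (huv : ∀ a ∈ Icc 0 R,
      ∫⁻ s in Ioc 0 a, ENNReal.ofReal (u s ^ p) ≤ ∫⁻ s in Ioc 0 a, ENNReal.ofReal (v s ^ p))
    (hfin : ∫⁻ s in Ioc 0 R, ENNReal.ofReal (u s ^ q) ≠ ∞) :
    ∫⁻ s in Ioc 0 R, ENNReal.ofReal (u s ^ q) ≤ ∫⁻ s in Ioc 0 R, ENNReal.ofReal (v s ^ q) := by
  have hpow : ∀ {w : ℝ → ℝ}, (∀ s, 0 ≤ w s) → ∀ s, (w s ^ p) ^ (q / p) = w s ^ q := fun hw0 s => by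
    rw [← Real.rpow_mul (hw0 s), mul_div_cancel₀ q hp.ne']
  simp only [← hpow hu0, ← hpow hv0] at hfin ⊢
  exact lintegral_rpow_le_of_forall_setLIntegral_le hR ((one_le_div hp).2 hpq)
    (fun s => Real.rpow_nonneg (hu0 s) p) (fun s => Real.rpow_nonneg (hv0 s) p)
    (fun a ha b hb hab => Real.rpow_le_rpow (hu0 b) (hu ha hb hab) hp.le) (hv.pow_const p) huv hfin

section Rearrangement

variable {R : ℝ} {f : ℝ → ℝ}

lemma distribFun_eq_toReal (R : ℝ) (f : ℝ → ℝ) (t : ℝ) :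
    distribFun R f t = (volume.restrict (Icc 0 R) {x | t < f x}).toReal := by
  rw [distribFun, Measure.restrict_apply' measurableSet_Icc, inter_comm]
  rfl

lemma distribFun_antitone (R : ℝ) (f : ℝ → ℝ) : Antitone (distribFun R f) := by
  intro t t' htt'
  simp only [distribFun_eq_toReal]
  exact ENNReal.toReal_mono (measure_ne_top _ _)
    (measure_mono fun x hx => htt'.trans_lt hx)

lemma distribFun_le (hR : 0 ≤ R) (t : ℝ) : distribFun R f t ≤ R := by
  rw [distribFun_eq_toReal]
  calc _ ≤ (volume.restrict (Icc 0 R) univ).toReal :=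
        ENNReal.toReal_mono (measure_ne_top _ _) (measure_mono (subset_univ _))
    _ = R := by simp [hR]

lemma exists_distribFun_le (hf : AEMeasurable f (volume.restrict (Icc 0 R))) {s : ℝ}
    (hs : 0 < s) : ∃ t, 0 ≤ t ∧ distribFun R f t ≤ s := by
  have hlim : Filter.Tendsto (fun n : ℕ => volume.restrict (Icc 0 R) {x | (n : ℝ) < f x})
      Filter.atTop (nhds 0) := by
    have := tendsto_measure_iInter_atTop (μ := volume.restrict (Icc 0 R))
      (s := fun n : ℕ => {x | (n : ℝ) < f x})
      (fun n => nullMeasurableSet_lt aemeasurable_const hf)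
      (fun n m hnm x (hx : (m : ℝ) < f x) => show (n : ℝ) < f x from
        (Nat.cast_le.2 hnm).trans_lt hx) ⟨0, measure_ne_top _ _⟩
    rwa [show ⋂ n : ℕ, {x | (n : ℝ) < f x} = ∅ from
      iInter_eq_empty_iff.2 fun x => ⟨⌈f x⌉₊, (Nat.le_ceil (f x)).not_gt⟩, measure_empty] at this
  obtain ⟨n, hn⟩ := (hlim.eventually_lt_const (ENNReal.ofReal_pos.2 hs)).exists
  refine ⟨n, n.cast_nonneg, ?_⟩
  rw [distribFun_eq_toReal]
  exact (ENNReal.toReal_mono ENNReal.ofReal_ne_top hn.le).trans_eq (ENNReal.toReal_ofReal hs.le)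

lemma decRearr_nonneg (R : ℝ) (f : ℝ → ℝ) (s : ℝ) : 0 ≤ decRearr R f s :=
  Real.sInf_nonneg fun _ ht => ht.1

lemma antitoneOn_decRearr (hf : AEMeasurable f (volume.restrict (Icc 0 R))) :
    AntitoneOn (decRearr R f) (Ioi 0) := fun _ hs _ _ hss' =>
  csInf_le_csInf ⟨0, fun _ ht => ht.1⟩ (exists_distribFun_le hf hs)
    fun _ ht => ⟨ht.1, ht.2.trans hss'⟩

lemma exists_lt_distribFun_add {t s : ℝ} (hs : 0 ≤ s) (hst : s < distribFun R f t) :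
    ∃ ε > 0, s < distribFun R f (t + ε) := by
  have hlim := tendsto_measure_iUnion_atTop (μ := volume.restrict (Icc 0 R))
    (s := fun n : ℕ => {x | t + 1 / (n + 1) < f x}) fun n m hnm x (hx : t + 1 / (n + 1) < f x) =>
      show t + 1 / ((m : ℝ) + 1) < f x from lt_of_le_of_lt (by gcongr) hx
  rw [show ⋃ n : ℕ, {x | t + 1 / (n + 1) < f x} = {x | t < f x} by
    ext x
    simp only [mem_iUnion, mem_ofPred_eq]
    refine ⟨fun ⟨n, hn⟩ => lt_of_le_of_lt (by simp; positivity) hn, fun hx => ?_⟩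
    obtain ⟨n, hn⟩ := exists_nat_one_div_lt (sub_pos.2 hx)
    exact ⟨n, by linarith⟩] at hlim
  rw [distribFun_eq_toReal, ← ENNReal.ofReal_lt_iff_lt_toReal hs (measure_ne_top _ _)] at hst
  obtain ⟨n, hn⟩ := (hlim.eventually_const_lt hst).exists
  refine ⟨1 / (n + 1), by positivity, ?_⟩
  rwa [distribFun_eq_toReal, ← ENNReal.ofReal_lt_iff_lt_toReal hs (measure_ne_top _ _)]

lemma lt_decRearr_iff (hf : AEMeasurable f (volume.restrict (Icc 0 R))) {t s : ℝ} (ht : 0 ≤ t)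
    (hs : 0 < s) : t < decRearr R f s ↔ s < distribFun R f t := by
  constructor
  · intro h
    by_contra! hts
    exact (csInf_le ⟨0, fun _ ht' => ht'.1⟩ (show t ∈ {t | 0 ≤ t ∧ distribFun R f t ≤ s} from
      ⟨ht, hts⟩)).not_gt h
  · intro h
    obtain ⟨ε, hε, hsε⟩ := exists_lt_distribFun_add hs.le h
    refine (lt_add_of_pos_right t hε).trans_le (le_csInf (exists_distribFun_le hf hs) ?_)
    rintro t' ⟨-, ht'⟩
    by_contra! h'
    exact (hsε.trans_le (distribFun_antitone R f h'.le)).not_ge ht'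

lemma restrict_Ioc_setOf_lt_decRearr (hR : 0 ≤ R) (hf : AEMeasurable f (volume.restrict (Icc 0 R)))
    {t : ℝ} (ht : 0 ≤ t) :
    volume.restrict (Ioc 0 R) {s | t < decRearr R f s} =
      volume.restrict (Icc 0 R) {x | t < f x} := by
  have hlevel : {s | t < decRearr R f s} ∩ Ioc 0 R = Ioo 0 (distribFun R f t) := by
    ext s
    simp only [mem_inter_iff, mem_ofPred_eq, mem_Ioc, mem_Ioo]
    constructor
    · rintro ⟨h, hs, -⟩
      exact ⟨hs, (lt_decRearr_iff hf ht hs).1 h⟩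
    · rintro ⟨hs, h⟩
      exact ⟨(lt_decRearr_iff hf ht hs).2 h, hs, h.le.trans (distribFun_le hR t)⟩
  rw [Measure.restrict_apply' measurableSet_Ioc, hlevel, Real.volume_Ioo, sub_zero,
    distribFun_eq_toReal, ENNReal.ofReal_toReal (measure_ne_top _ _)]

end Rearrangement

lemma setOf_lt_rpow_eq {γ : Type*} {g : γ → ℝ} (hg : ∀ x, 0 ≤ g x) {c t : ℝ} (hc : 0 < c)
    (ht : 0 < t) : {x | t < g x ^ c} = {x | t ^ c⁻¹ < g x} := by
  ext x
  rw [mem_ofPred_eq, mem_ofPred_eq, ← Real.rpow_lt_rpow_iff (by positivity) (hg x) hc,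
    Real.rpow_inv_rpow ht.le hc.ne']

theorem lintegral_rpow_eq_of_measure_lt_eq {α β : Type*} [MeasurableSpace α] [MeasurableSpace β]
    {μ : Measure α} {ν : Measure β} {F : α → ℝ} {f : β → ℝ} (hF0 : ∀ a, 0 ≤ F a)
    (hf0 : ∀ b, 0 ≤ f b) (hF : AEMeasurable F μ) (hf : AEMeasurable f ν)
    (h : ∀ t, 0 < t → μ {a | t < F a} = ν {b | t < f b}) {c : ℝ} (hc : 0 < c) :
    ∫⁻ a, ENNReal.ofReal (F a ^ c) ∂μ = ∫⁻ b, ENNReal.ofReal (f b ^ c) ∂ν := by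
  rw [lintegral_eq_lintegral_meas_lt μ (ae_of_all _ fun a => Real.rpow_nonneg (hF0 a) c)
      (hF.pow_const c),
    lintegral_eq_lintegral_meas_lt ν (ae_of_all _ fun b => Real.rpow_nonneg (hf0 b) c)
      (hf.pow_const c)]
  refine setLIntegral_congr_fun measurableSet_Ioi fun t (ht : 0 < t) => ?_
  rw [setOf_lt_rpow_eq hF0 hc ht, setOf_lt_rpow_eq hf0 hc ht, h _ (by positivity)]

lemma MeasureTheory.MemLp.lintegral_ofReal_rpow_ne_top {α : Type*} [MeasurableSpace α]
    {μ : Measure α} [IsFiniteMeasure μ] {f : α → ℝ} {p q : ℝ} (hf : MemLp f (ENNReal.ofReal q) μ)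
    (hf0 : ∀ x, 0 ≤ f x) (hp : 0 < p) (hpq : p ≤ q) :
    ∫⁻ x, ENNReal.ofReal (f x ^ p) ∂μ ≠ ∞ := by
  have h := (hf.mono_exponent (ENNReal.ofReal_le_ofReal hpq)).integrable_norm_rpow
    (by simpa using hp) ENNReal.ofReal_ne_top
  simp only [ENNReal.toReal_ofReal hp.le, Real.norm_of_nonneg (hf0 _)] at h
  exact h.lintegral_lt_top.ne

lemma intervalIntegral_eq_toReal_setLIntegral {a b : ℝ} (hab : a ≤ b) {h : ℝ → ℝ}
    (h0 : ∀ x, 0 ≤ h x) (hm : AEMeasurable h (volume.restrict (Ioc a b))) :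
    ∫ x in a..b, h x = (∫⁻ x in Ioc a b, ENNReal.ofReal (h x)).toReal := by
  rw [intervalIntegral.integral_of_le hab,
    integral_eq_lintegral_of_nonneg_ae (ae_of_all _ h0) hm.aestronglyMeasurable]

section Rearrangement

variable {R : ℝ} {f : ℝ → ℝ}

lemma aemeasurable_decRearr (hf : AEMeasurable f (volume.restrict (Icc 0 R))) (a : ℝ) :
    AEMeasurable (decRearr R f) (volume.restrict (Ioc 0 a)) :=
  aemeasurable_restrict_of_antitoneOn measurableSet_Ioc
    ((antitoneOn_decRearr hf).mono Ioc_subset_Ioi_self)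

theorem lintegral_decRearr_rpow (hR : 0 ≤ R) (hf : AEMeasurable f (volume.restrict (Icc 0 R)))
    (hf0 : ∀ x, 0 ≤ f x) {c : ℝ} (hc : 0 < c) :
    ∫⁻ s in Ioc 0 R, ENNReal.ofReal (decRearr R f s ^ c) =
      ∫⁻ x in Icc 0 R, ENNReal.ofReal (f x ^ c) :=
  lintegral_rpow_eq_of_measure_lt_eq (decRearr_nonneg R f) hf0 (aemeasurable_decRearr hf R) hf
    (fun _ ht => restrict_Ioc_setOf_lt_decRearr hR hf ht.le) hc

lemma setLIntegral_decRearr_rpow_ne_top (hR : 0 ≤ R) {q : ℝ}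
    (hf : MemLp f (ENNReal.ofReal q) (volume.restrict (Icc 0 R))) (hf0 : ∀ x, 0 ≤ f x)
    {p a : ℝ} (hp : 0 < p) (hpq : p ≤ q) (haR : a ≤ R) :
    ∫⁻ s in Ioc 0 a, ENNReal.ofReal (decRearr R f s ^ p) ≠ ∞ := by
  refine ne_top_of_le_ne_top ?_ (lintegral_mono_set (Ioc_subset_Ioc_right haR))
  rw [lintegral_decRearr_rpow hR hf.1.aemeasurable hf0 hp]
  exact hf.lintegral_ofReal_rpow_ne_top hf0 hp hpq

lemma intervalIntegral_decRearr_rpow (hf : AEMeasurable f (volume.restrict (Icc 0 R))) {a : ℝ}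
    (ha : 0 ≤ a) (p : ℝ) :
    ∫ t in (0:ℝ)..a, decRearr R f t ^ p =
      (∫⁻ s in Ioc 0 a, ENNReal.ofReal (decRearr R f s ^ p)).toReal :=
  intervalIntegral_eq_toReal_setLIntegral ha (fun _ => Real.rpow_nonneg (decRearr_nonneg R f _) p)
    ((aemeasurable_decRearr hf a).pow_const p)

lemma intervalIntegral_rpow_eq_lintegral_decRearr (hR : 0 ≤ R)
    (hf : AEMeasurable f (volume.restrict (Icc 0 R))) (hf0 : ∀ x, 0 ≤ f x) {q : ℝ} (hq : 0 < q) :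
    ∫ t in (0:ℝ)..R, f t ^ q = (∫⁻ s in Ioc 0 R, ENNReal.ofReal (decRearr R f s ^ q)).toReal := by
  rw [intervalIntegral_eq_toReal_setLIntegral hR (fun _ => Real.rpow_nonneg (hf0 _) q)
      ((hf.mono_set Ioc_subset_Icc_self).pow_const q),
    setLIntegral_congr Ioc_ae_eq_Icc, lintegral_decRearr_rpow hR hf hf0 hq]

end Rearrangement

/-- Hardy–Littlewood–Pólya comparison lemma: if the `p`-th power integrals of the
decreasing rearrangements are comparable on every initial segment of `[0,R]`,
then the `L^q` norms are comparable for every `q ≥ p`. -/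
theorem stmt0 (R p q : ℝ) (hR : 0 < R) (hp : 0 < p) (hpq : p ≤ q)
    (f g : ℝ → ℝ) (hf0 : ∀ x, 0 ≤ f x) (hg0 : ∀ x, 0 ≤ g x)
    (hf : MemLp f (ENNReal.ofReal q) (volume.restrict (Icc (0:ℝ) R)))
    (hg : MemLp g (ENNReal.ofReal q) (volume.restrict (Icc (0:ℝ) R)))
    (hcomp : ∀ s ∈ Icc (0:ℝ) R,
      ∫ t in (0:ℝ)..s, (decRearr R f t) ^ p ≤ ∫ t in (0:ℝ)..s, (decRearr R g t) ^ p) :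
    ∫ t in (0:ℝ)..R, (f t) ^ q ≤ ∫ t in (0:ℝ)..R, (g t) ^ q := by
  have hq : 0 < q := hp.trans_le hpq
  have hcomp' : ∀ a ∈ Icc 0 R, ∫⁻ s in Ioc 0 a, ENNReal.ofReal (decRearr R f s ^ p) ≤
      ∫⁻ s in Ioc 0 a, ENNReal.ofReal (decRearr R g s ^ p) := fun a ha =>
    (ENNReal.toReal_le_toReal (setLIntegral_decRearr_rpow_ne_top hR.le hf hf0 hp hpq ha.2)
      (setLIntegral_decRearr_rpow_ne_top hR.le hg hg0 hp hpq ha.2)).1 <| by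
        simpa only [intervalIntegral_decRearr_rpow hf.1.aemeasurable ha.1,
          intervalIntegral_decRearr_rpow hg.1.aemeasurable ha.1] using hcomp a ha
  rw [intervalIntegral_rpow_eq_lintegral_decRearr hR.le hf.1.aemeasurable hf0 hq,
    intervalIntegral_rpow_eq_lintegral_decRearr hR.le hg.1.aemeasurable hg0 hq]
  exact ENNReal.toReal_mono (setLIntegral_decRearr_rpow_ne_top hR.le hg hg0 hq le_rfl le_rfl)
    (lintegral_rpow_le_of_forall_setLIntegral_rpow_le hR.le hp hpq (decRearr_nonneg R f)
      (decRearr_nonneg R g) ((antitoneOn_decRearr hf.1.aemeasurable).mono Ioc_subset_Ioi_self)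
      (aemeasurable_decRearr hg.1.aemeasurable R) hcomp'
      (setLIntegral_decRearr_rpow_ne_top hR.le hf hf0 hq le_rfl le_rfl))
end

section
/- With the hypotheses and notation above (Ric(M) ≥ n-1, D ⊂ M with first Dirichlet eigenvalue λ and eigenfunction u, u* its decreasing rearrangement, v the radial first eigenfunction of the geodesic ball B_{θ₁(λ)} ⊂ S^n with the same eigenvalue, v*(A(θ)) = v(θ)): if v is normalized so that v*(0) = u*(0), then u*(s) ≥ v*(s) for all s ∈ [0, A(θ₁)]. -/
/-!
Write `U = ∫₀ˣ u*`, `V = ∫₀ˣ v*` and `k` for the coefficient of the integro-differential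
relations. The Wronskian-type function `W = u* V - v* U` is absolutely continuous, vanishes
at `0`, and `W' = (u*' + k U) V ≥ 0` almost everywhere, so `W ≥ 0`. As `W / V²` is the
derivative of `U / V`, this ratio increases on `(0, L]`; by l'Hôpital it tends to
`u*(0) / v*(0) = 1` at `0`, so `V ≤ U`. Hence `v* V ≤ v* U ≤ u* V`, i.e. `v* ≤ u*`.
-/

open MeasureTheory Set

/-- Absolute continuity of a real function on `[a,b]`, expressed through the
(equivalent) integral representation by an integrable density. -/
def ACOn (F : ℝ → ℝ) (a b : ℝ) : Prop :=
  ∃ f : ℝ → ℝ, IntegrableOn f (Icc a b) ∧ ∀ x ∈ Icc a b, F x = F a + ∫ t in a..x, f t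

open Filter Topology

theorem AbsolutelyContinuousOnInterval.congr {X : Type*} [PseudoMetricSpace X] {f g : ℝ → X}
    {a b : ℝ} (hf : AbsolutelyContinuousOnInterval f a b) (hfg : EqOn f g (uIcc a b)) :
    AbsolutelyContinuousOnInterval g a b := by
  refine Tendsto.congr' ?_ hf
  rw [eventuallyEq_inf_principal_iff]
  filter_upwards with E hE
  exact Finset.sum_congr rfl fun i hi => by rw [hfg (hE.1 i hi).1, hfg (hE.1 i hi).2]

theorem ACOn.absolutelyContinuousOnInterval {F : ℝ → ℝ} {a b : ℝ} (hF : ACOn F a b)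
    (hab : a ≤ b) : AbsolutelyContinuousOnInterval F a b := by
  obtain ⟨f, hf, hF⟩ := hF
  have hfi : IntervalIntegrable f volume a b :=
    (intervalIntegrable_iff_integrableOn_Icc_of_le hab).2 hf
  refine ((contDiffOn_const (c := F a)).absolutelyContinuousOnInterval.fun_add
    (hfi.absolutelyContinuousOnInterval_intervalIntegral left_mem_uIcc)).congr ?_
  rw [uIcc_of_le hab]
  exact fun x hx => (hF x hx).symm

section Primitive

variable {u : ℝ → ℝ} {a b : ℝ}

theorem ContinuousOn.continuousOn_primitive (hu : ContinuousOn u (Icc a b)) :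
    ContinuousOn (fun x => ∫ t in a..x, u t) (Icc a b) := by
  rcases le_or_gt a b with hab | hba
  · simpa [uIcc_of_le hab] using
      intervalIntegral.continuousOn_primitive_interval (a := a) (b := b)
        (by simpa [uIcc_of_le hab] using hu.integrableOn_Icc)
  · simp [Icc_eq_empty_of_lt hba]

theorem ContinuousOn.hasDerivAt_primitive (hu : ContinuousOn u (Icc a b)) {x : ℝ}
    (hx : x ∈ Ioo a b) : HasDerivAt (fun y => ∫ t in a..y, u t) (u x) x :=
  intervalIntegral.integral_hasDerivAt_right
    ((hu.mono (Icc_subset_Icc_right hx.2.le)).intervalIntegrable_of_Icc hx.1.le)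
    ((hu.mono Ioo_subset_Icc_self).stronglyMeasurableAtFilter isOpen_Ioo x hx)
    (hu.continuousAt (Icc_mem_nhds hx.1 hx.2))

end Primitive

section Comparison

variable {u v k : ℝ → ℝ} {a b : ℝ}

theorem tendsto_primitive_div_primitive (hab : a < b) (hu : ContinuousOn u (Icc a b))
    (hv : ContinuousOn v (Icc a b)) (hv_ne : ∀ x ∈ Ico a b, v x ≠ 0) :
    Tendsto (fun x => (∫ t in a..x, u t) / ∫ t in a..x, v t) (𝓝[>] a) (𝓝 (u a / v a)) :=
  HasDerivAt.lhopital_zero_right_on_Ico hab (fun _ hx => hu.hasDerivAt_primitive hx)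
    (fun _ hx => hv.hasDerivAt_primitive hx) (hu.continuousOn_primitive.mono Ico_subset_Icc_self)
    (hv.continuousOn_primitive.mono Ico_subset_Icc_self)
    (fun x hx => hv_ne x (Ioo_subset_Ico_self hx)) intervalIntegral.integral_same
    intervalIntegral.integral_same
    ((((hu a (left_mem_Icc.2 hab.le)).div (hv a (left_mem_Icc.2 hab.le))
      (hv_ne a (left_mem_Ico.2 hab))).tendsto).mono_left
      (nhdsWithin_le_of_mem (Icc_mem_nhdsGT hab)))

theorem monotoneOn_primitive_div_primitive (hu : ContinuousOn u (Icc a b))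
    (hv : ContinuousOn v (Icc a b)) (hV : ∀ x ∈ Ioc a b, 0 < ∫ t in a..x, v t)
    (hW : ∀ x ∈ Ioo a b, v x * (∫ t in a..x, u t) ≤ u x * ∫ t in a..x, v t) :
    MonotoneOn (fun x => (∫ t in a..x, u t) / ∫ t in a..x, v t) (Ioc a b) := by
  have hderiv : ∀ x ∈ Ioo a b, HasDerivAt (fun x => (∫ t in a..x, u t) / ∫ t in a..x, v t)
      ((u x * (∫ t in a..x, v t) - (∫ t in a..x, u t) * v x) / (∫ t in a..x, v t) ^ 2) x :=
    fun x hx => (hu.hasDerivAt_primitive hx).div (hv.hasDerivAt_primitive hx)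
      (hV x (Ioo_subset_Ioc_self hx)).ne'
  refine monotoneOn_of_deriv_nonneg (convex_Ioc a b) ?_ ?_ ?_
  · exact (hu.continuousOn_primitive.mono Ioc_subset_Icc_self).div
      (hv.continuousOn_primitive.mono Ioc_subset_Icc_self) fun x hx => (hV x hx).ne'
  · rw [interior_Ioc]
    exact fun x hx => (hderiv x hx).differentiableAt.differentiableWithinAt
  · rw [interior_Ioc]
    intro x hx
    rw [(hderiv x hx).deriv]
    exact div_nonneg (by linarith [hW x hx]) (sq_nonneg _)

theorem wronskian_nonneg (hu : AbsolutelyContinuousOnInterval u a b)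
    (hv : AbsolutelyContinuousOnInterval v a b) (hv_nonneg : ∀ x ∈ Icc a b, 0 ≤ v x)
    (hu' : ∀ᵐ s ∂(volume.restrict (Ioo a b)), -deriv u s ≤ k s * ∫ t in a..s, u t)
    (hv' : ∀ᵐ s ∂(volume.restrict (Ioo a b)), deriv v s = -(k s * ∫ t in a..s, v t))
    {x : ℝ} (hx : x ∈ Icc a b) :
    v x * (∫ t in a..x, u t) ≤ u x * ∫ t in a..x, v t := by
  have hab : a ≤ b := hx.1.trans hx.2
  have huc : ContinuousOn u (Icc a b) := by simpa [uIcc_of_le hab] using hu.continuousOn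
  have hvc : ContinuousOn v (Icc a b) := by simpa [uIcc_of_le hab] using hv.continuousOn
  set U := fun x => ∫ t in a..x, u t
  set V := fun x => ∫ t in a..x, v t
  set W := fun x => u x * V x - v x * U x
  have hUac : AbsolutelyContinuousOnInterval U a b :=
    (huc.intervalIntegrable_of_Icc hab).absolutelyContinuousOnInterval_intervalIntegral
      left_mem_uIcc
  have hVac : AbsolutelyContinuousOnInterval V a b :=
    (hvc.intervalIntegrable_of_Icc hab).absolutelyContinuousOnInterval_intervalIntegral
      left_mem_uIcc
  have hWac : AbsolutelyContinuousOnInterval W a x :=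
    ((hu.fun_mul hVac).fun_sub (hv.fun_mul hUac)).mono
      (by simpa [uIcc_of_le hab, uIcc_of_le hx.1] using Icc_subset_Icc_right hx.2)
  have hW' : ∀ᵐ s ∂(volume.restrict (Ioo a b)), 0 ≤ deriv W s := by
    filter_upwards [hu', hv', ae_restrict_of_ae hu.ae_differentiableAt,
      ae_restrict_of_ae hv.ae_differentiableAt, ae_restrict_mem measurableSet_Ioo]
      with s hus hvs hdu hdv hs
    have hs' : s ∈ uIcc a b := by rw [uIcc_of_le hab]; exact Ioo_subset_Icc_self hs
    have hVs : 0 ≤ V s := intervalIntegral.integral_nonneg hs.1.le fun t ht =>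
      hv_nonneg t ⟨ht.1, ht.2.trans hs.2.le⟩
    have hWs : HasDerivAt W (deriv u s * V s + u s * v s - (deriv v s * U s + v s * u s)) s :=
      ((hdu hs').hasDerivAt.mul (hvc.hasDerivAt_primitive hs)).sub
        ((hdv hs').hasDerivAt.mul (huc.hasDerivAt_primitive hs))
    have hd : deriv W s = (deriv u s + k s * U s) * V s := by
      rw [hWs.deriv, hvs]
      ring
    rw [hd]
    exact mul_nonneg (by linarith) hVs
  have hW'x : 0 ≤ᵐ[volume.restrict (Icc a x)] deriv W :=
    ae_restrict_of_ae_restrict_of_subset (Icc_subset_Icc_right hx.2)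
      (by rwa [← Measure.restrict_congr_set Ioo_ae_eq_Icc])
  have hWa : W a = 0 := by simp [W, U, V]
  calc v x * U x ≤ v x * U x + ∫ s in a..x, deriv W s :=
        le_add_of_nonneg_right (intervalIntegral.integral_nonneg_of_ae_restrict hx.1 hW'x)
    _ = u x * V x := by rw [hWac.integral_deriv_eq_sub, hWa, sub_zero]; ring

theorem le_of_neg_deriv_le_mul_integral (hu : AbsolutelyContinuousOnInterval u a b)
    (hv : AbsolutelyContinuousOnInterval v a b) (hv_nonneg : ∀ x ∈ Icc a b, 0 ≤ v x)
    (hv_pos : ∀ x ∈ Ico a b, 0 < v x)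
    (hu' : ∀ᵐ s ∂(volume.restrict (Ioo a b)), -deriv u s ≤ k s * ∫ t in a..s, u t)
    (hv' : ∀ᵐ s ∂(volume.restrict (Ioo a b)), deriv v s = -(k s * ∫ t in a..s, v t))
    (hva : v a = u a) {x : ℝ} (hx : x ∈ Icc a b) : v x ≤ u x := by
  rcases hx.1.eq_or_lt with rfl | hax
  · exact hva.le
  have hab : a < b := hax.trans_le hx.2
  have huc : ContinuousOn u (Icc a b) := by simpa [uIcc_of_le hab.le] using hu.continuousOn
  have hvc : ContinuousOn v (Icc a b) := by simpa [uIcc_of_le hab.le] using hv.continuousOn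
  have hV : ∀ y ∈ Ioc a b, 0 < ∫ t in a..y, v t := fun y hy =>
    intervalIntegral.intervalIntegral_pos_of_pos_on
      ((hvc.mono (Icc_subset_Icc_right hy.2)).intervalIntegrable_of_Icc hy.1.le)
      (fun t ht => hv_pos t ⟨ht.1.le, ht.2.trans_le hy.2⟩) hy.1
  have hW := fun y (hy : y ∈ Icc a b) => wronskian_nonneg hu hv hv_nonneg hu' hv' hy
  have hlim := tendsto_primitive_div_primitive hab huc hvc fun y hy => (hv_pos y hy).ne'
  rw [← hva, div_self (hv_pos a (left_mem_Ico.2 hab)).ne'] at hlim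
  have hratio : 1 ≤ (∫ t in a..x, u t) / ∫ t in a..x, v t := by
    refine le_of_tendsto hlim ?_
    filter_upwards [Ioo_mem_nhdsGT hax] with y hy
    exact monotoneOn_primitive_div_primitive huc hvc hV (fun y hy => hW y (Ioo_subset_Icc_self hy))
      ⟨hy.1, hy.2.le.trans hx.2⟩ ⟨hax, hx.2⟩ hy.2.le
  have hVx := hV x ⟨hax, hx.2⟩
  have hUV : (∫ t in a..x, v t) ≤ ∫ t in a..x, u t := (one_le_div hVx).1 hratio
  refine le_of_mul_le_mul_right ?_ hVx
  calc v x * (∫ t in a..x, v t) ≤ v x * ∫ t in a..x, u t :=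
        mul_le_mul_of_nonneg_left hUV (hv_nonneg x hx)
    _ ≤ u x * ∫ t in a..x, v t := hW x hx

end Comparison

theorem stmt9_general (n : ℕ) (β ω lam : ℝ) (L VolD : ℝ)
    (hLV : L ≤ VolD)  -- `Vol(D) ≥ A(θ₁)` (the "claim")
    (Θ : ℝ → ℝ) (ustar : ℝ → ℝ) (hus_ac : ACOn ustar 0 VolD)
    -- the integro-differential inequality satisfied by `u*`:
    (hu : ∀ᵐ s ∂(volume.restrict (Ioo 0 L)),
      -deriv ustar s ≤ lam / ((β * ω) ^ 2 * Real.sin (Θ s) ^ (2 * n - 2)) * ∫ ξ in (0:ℝ)..s, ustar ξ)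
    (vstar : ℝ → ℝ) (hvs_ac : ACOn vstar 0 L)
    (hvs_pos : ∀ s ∈ Ico (0:ℝ) L, 0 < vstar s) (hvs_bd : vstar L = 0)
    -- the corresponding equality satisfied by `v*`:
    (hv : ∀ s ∈ Ioc (0:ℝ) L,
      HasDerivWithinAt vstar
        (-(lam / ((β * ω) ^ 2 * Real.sin (Θ s) ^ (2 * n - 2)) * ∫ ξ in (0:ℝ)..s, vstar ξ))
        (Icc 0 L) s)
    -- normalization:
    (hnorm : vstar 0 = ustar 0) :
    ∀ s ∈ Icc (0:ℝ) L, vstar s ≤ ustar s := by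
  intro s hs
  have hL0 : 0 ≤ L := hs.1.trans hs.2
  have hvs_nonneg : ∀ x ∈ Icc 0 L, 0 ≤ vstar x := fun x hx =>
    hx.2.eq_or_lt.elim (fun h => h ▸ hvs_bd.ge) fun h => (hvs_pos x ⟨hx.1, h⟩).le
  have hv' : ∀ᵐ x ∂(volume.restrict (Ioo 0 L)), deriv vstar x =
      -(lam / ((β * ω) ^ 2 * Real.sin (Θ x) ^ (2 * n - 2)) * ∫ ξ in (0:ℝ)..x, vstar ξ) :=
    ae_restrict_of_forall_mem measurableSet_Ioo fun x hx =>
      ((hv x (Ioo_subset_Ioc_self hx)).hasDerivAt (Icc_mem_nhds hx.1 hx.2)).deriv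
  exact le_of_neg_deriv_le_mul_integral
    ((hus_ac.absolutelyContinuousOnInterval (hL0.trans hLV)).mono
      (by simpa [uIcc_of_le hL0, uIcc_of_le (hL0.trans hLV)] using Icc_subset_Icc_right hLV))
    (hvs_ac.absolutelyContinuousOnInterval hL0) hvs_nonneg hvs_pos hu hv' hnorm hs

/-- Chiti comparison lemma (Lemma 3.1): with `u*` the decreasing rearrangement of the
first Dirichlet eigenfunction of `D ⊂ M` (`Ric(M) ≥ n-1`), satisfying the
integro-differential *inequality*, and `v*` the rearranged radial first eigenfunction
of the ball `B_{θ₁(λ)} ⊂ Sⁿ` with the same eigenvalue `λ`, satisfying the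
corresponding *equality*, normalized by `v*(0) = u*(0)`: then `u* ≥ v*` on `[0, A(θ₁)]`.
`λ` is the first Dirichlet eigenvalue of `B_{θ₁}`, encoded by minimality and
simplicity of the Rayleigh quotient written in the variable `s = A(θ)`. -/
theorem stmt9 (n : ℕ) (hn : 2 ≤ n) (β ω θ₁ lam : ℝ) (hβ : 0 < β) (hω : 0 < ω)
    (hlam : 0 < lam) (hθ₁ : θ₁ ∈ Ioo 0 Real.pi)
    (L VolD : ℝ) (hL : L = β * ω * ∫ τ in (0:ℝ)..θ₁, Real.sin τ ^ (n-1))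
    (hLV : L ≤ VolD)  -- `Vol(D) ≥ A(θ₁)` (the "claim")
    (Θ : ℝ → ℝ) (hΘ : ∀ s ∈ Icc (0:ℝ) L, β * ω * ∫ τ in (0:ℝ)..(Θ s), Real.sin τ ^ (n-1) = s)
    (ustar : ℝ → ℝ) (hus_ac : ACOn ustar 0 VolD) (hus_mono : AntitoneOn ustar (Icc 0 VolD))
    (hus_pos : ∀ s ∈ Ico (0:ℝ) VolD, 0 < ustar s)
    -- the integro-differential inequality satisfied by `u*`:
    (hu : ∀ᵐ s ∂(volume.restrict (Ioo 0 L)),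
      -deriv ustar s ≤ lam / ((β * ω) ^ 2 * Real.sin (Θ s) ^ (2 * n - 2)) * ∫ ξ in (0:ℝ)..s, ustar ξ)
    (vstar : ℝ → ℝ) (hvs_ac : ACOn vstar 0 L) (hvs_mono : AntitoneOn vstar (Icc 0 L))
    (hvs_pos : ∀ s ∈ Ico (0:ℝ) L, 0 < vstar s) (hvs_bd : vstar L = 0)
    -- the corresponding equality satisfied by `v*`:
    (hv : ∀ s ∈ Ioc (0:ℝ) L,
      HasDerivWithinAt vstar
        (-(lam / ((β * ω) ^ 2 * Real.sin (Θ s) ^ (2 * n - 2)) * ∫ ξ in (0:ℝ)..s, vstar ξ))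
        (Icc 0 L) s)
    -- `λ` is the first Dirichlet eigenvalue of `B_{θ₁}` (variational characterization):
    (hmin : ∀ φ : ℝ → ℝ, ACOn φ 0 L → φ L = 0 → (∃ s ∈ Icc (0:ℝ) L, φ s ≠ 0) →
      lam * ∫ s in (0:ℝ)..L, (φ s) ^ 2
        ≤ β ^ 2 * ω * ∫ s in (0:ℝ)..L, (deriv φ s) ^ 2 * Real.sin (Θ s) ^ (2 * n - 2))
    -- … and it is simple, with eigenfunction `v*`:
    (hsimple : ∀ φ : ℝ → ℝ, ACOn φ 0 L → φ L = 0 →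
      lam * ∫ s in (0:ℝ)..L, (φ s) ^ 2
        = β ^ 2 * ω * ∫ s in (0:ℝ)..L, (deriv φ s) ^ 2 * Real.sin (Θ s) ^ (2 * n - 2) →
      ∃ c : ℝ, ∀ s ∈ Icc (0:ℝ) L, φ s = c * vstar s)
    -- normalization:
    (hnorm : vstar 0 = ustar 0) :
    ∀ s ∈ Icc (0:ℝ) L, vstar s ≤ ustar s :=
  stmt9_general n β ω lam L VolD hLV Θ ustar hus_ac hu vstar hvs_ac hvs_pos hvs_bd hv hnorm
end
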